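/- Placing a single facility at the candidate location closest to the median of the reported positions is strategyproof: let ι be a nonempty finite set, C ⊆ ℝ a nonempty finite set, and define g(x) = t(med(x)) for x : ι → ℝ, where med(x) is the ⌈|ι|/2⌉-th smallest value among the x_i and t(p) is the smallest element of C minimizing |p − c| over c ∈ C. Then for every x : ι → ℝ, every i ∈ ι, and every x' ∈ ℝ, |x_i − g(x)| ≤ |x_i − g(x[i ↦ x'])|, where x[i ↦ x'] is x with the i-th coordinate replaced by x'. -/

import Mathlib

open Finset

/-- The smallest element of `C` minimizing the distance to `p`. -/
noncomputable def tloc (C : Finset ℝ) (p : ℝ) : ℝ :=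
  WithTop.untopD 0 ((C.filter fun c => ∀ c' ∈ C, |p - c| ≤ |p - c'|).min)

/-- The smallest element of `C \ {tloc C p}` minimizing the distance to `p`. -/
noncomputable def sloc (C : Finset ℝ) (p : ℝ) : ℝ :=
  tloc (C.erase (tloc C p)) p

/-- The `⌈n/2⌉`-th smallest element of a multiset of reals (0 if empty). -/
noncomputable def medOf (l : Multiset ℝ) : ℝ :=
  (l.sort (· ≤ ·)).getD ((Multiset.card l + 1) / 2 - 1) 0

/-- The median position of the agents in `S` with positions `x`. -/
noncomputable def medianPos (S : Finset ℕ) (x : ℕ → ℝ) : ℝ :=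
  medOf (S.val.map x)

/-- The Conditional-Median mechanism, assuming facility 1 is (weakly) more popular. -/
noncomputable def condMedian (x : ℕ → ℝ) (N1 N2 : Finset ℕ) (C : Finset ℝ) : ℝ × ℝ :=
  if (N1 ∩ N2).card ≤ (N1 \ N2).card then
    let m1 := medianPos (N1 \ N2) x
    let m2 := medianPos N2 x
    let w1 := tloc C m1
    (w1, if tloc C m2 ≠ w1 then tloc C m2 else sloc C m2)
  else
    let m12 := medianPos (N1 ∩ N2) x
    (tloc C m12, sloc C m12)

/-- The output of the Conditional-Median mechanism (roles swapped if `|N₂| > |N₁|`). -/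
noncomputable def mechOutput (x : ℕ → ℝ) (N1 N2 : Finset ℕ) (C : Finset ℝ) : ℝ × ℝ :=
  if N2.card ≤ N1.card then condMedian x N1 N2 C
  else (condMedian x N2 N1 C).swap

/-- The cost of agent `i` at solution `y`: the distance to the farthest approved facility. -/
noncomputable def cost (x : ℕ → ℝ) (N1 N2 : Finset ℕ) (i : ℕ) (y : ℝ × ℝ) : ℝ :=
  if i ∈ N1 then
    if i ∈ N2 then max |x i - y.1| |x i - y.2| else |x i - y.1|
  else |x i - y.2|

/-- The social cost. -/
noncomputable def SC (x : ℕ → ℝ) (N1 N2 N : Finset ℕ) (y : ℝ × ℝ) : ℝ :=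
  ∑ i ∈ N, cost x N1 N2 i y

/-- The max cost. -/
noncomputable def MC (x : ℕ → ℝ) (N1 N2 N : Finset ℕ) (hN : N.Nonempty) (y : ℝ × ℝ) : ℝ :=
  N.sup' hN fun i => cost x N1 N2 i y

/-!
Let `m`, `m'` be the truthful and the manipulated median and `t`, `t'` the candidates closest
to them. Since `|z - a| ≤ |z - b| ↔ (b - a) * (2 * z - (a + b)) ≤ 0`, whether a point `z` is
at least as close to `a` as to `b` is an affine condition in `z`. The median `m` prefers `t` to
`t'`, so agent `i` does as well once `t' - t` has the sign of `m - x i`: a single agent on one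
side of the median can only push it away from itself, and the closest candidate is monotone in
the median.
-/

theorem Multiset.countP_mono_left {α : Type*} {s : Multiset α} {p q : α → Prop}
    [DecidablePred p] [DecidablePred q] (h : ∀ a ∈ s, p a → q a) : s.countP p ≤ s.countP q := by
  induction s using Quotient.inductionOn
  simpa using List.countP_mono_left (by simpa using h)

section OrderStatistic

variable {α : Type*} [LinearOrder α]

theorem List.SortedLE.lt_countP_le_getElem {L : List α} (hL : L.SortedLE) {k : ℕ}
    (hk : k < L.length) : k < L.countP (· ≤ L[k]) :=
  calc k < (L.take (k + 1)).length := by simp; omega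
    _ = (L.take (k + 1)).countP (· ≤ L[k]) := by
      refine (List.countP_eq_length.2 fun a ha => ?_).symm
      obtain ⟨j, hj, rfl⟩ := List.mem_take_iff_getElem.1 ha
      simpa using hL.getElem_le_getElem_of_le (by omega)
    _ ≤ _ := (List.take_sublist _ _).countP_le

theorem List.SortedLE.countP_lt_getElem_le {L : List α} (hL : L.SortedLE) {k : ℕ}
    (hk : k < L.length) : L.countP (· < L[k]) ≤ k := by
  have hdrop : (L.drop k).countP (· < L[k]) = 0 := by
    refine List.countP_eq_zero.2 fun a ha => ?_
    obtain ⟨j, hj, rfl⟩ := List.mem_drop_iff_getElem.1 ha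
    simpa using hL.getElem_le_getElem_of_le (by omega)
  calc L.countP (· < L[k]) = (L.take k ++ L.drop k).countP (· < L[k]) := by
        rw [List.take_append_drop]
    _ = (L.take k).countP (· < L[k]) := by rw [List.countP_append, hdrop, add_zero]
    _ ≤ (L.take k).length := List.countP_le_length
    _ ≤ k := List.length_take_le _ _

theorem Multiset.lt_countP_le_sort_getD (l : Multiset α) {k : ℕ} (hk : k < card l) (d : α) :
    k < l.countP (· ≤ l.sort.getD k d) := by
  have hkL : k < l.sort.length := by rwa [length_sort]
  have := ((pairwise_sort l _).sortedLE).lt_countP_le_getElem hkL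
  rw [← List.getD_eq_getElem _ d hkL] at this
  generalize l.sort.getD k d = m at this ⊢
  rwa [← sort_eq l (· ≤ ·), coe_countP]

theorem Multiset.countP_lt_sort_getD_le (l : Multiset α) {k : ℕ} (hk : k < card l) (d : α) :
    l.countP (· < l.sort.getD k d) ≤ k := by
  have hkL : k < l.sort.length := by rwa [length_sort]
  have := ((pairwise_sort l _).sortedLE).countP_lt_getElem_le hkL
  rw [← List.getD_eq_getElem _ d hkL] at this
  generalize l.sort.getD k d = m at this ⊢
  rwa [← sort_eq l (· ≤ ·), coe_countP]

theorem Multiset.sort_getD_cons_le_of_lt (s : Multiset α) {k : ℕ} (hk : k ≤ card s) (d : α)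
    {u : α} (y : α) (hu : u < (u ::ₘ s).sort.getD k d) :
    (u ::ₘ s).sort.getD k d ≤ (y ::ₘ s).sort.getD k d := by
  have hk' : k < card (u ::ₘ s) := by rw [card_cons]; omega
  have hbelow := countP_lt_sort_getD_le (u ::ₘ s) hk' d
  have habove := lt_countP_le_sort_getD (y ::ₘ s) (by rwa [card_cons] at hk' ⊢) d
  set m := (u ::ₘ s).sort.getD k d
  set m' := (y ::ₘ s).sort.getD k d
  by_contra! hm
  have hmono : s.countP (· ≤ m') ≤ s.countP (· < m) :=
    countP_mono_left fun a _ ha => ha.trans_lt hm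
  rw [countP_cons_of_pos (p := (· < m)) _ hu] at hbelow
  rw [countP_cons] at habove
  split_ifs at habove <;> omega

theorem Multiset.sort_getD_cons_le_of_gt (s : Multiset α) {k : ℕ} (hk : k ≤ card s) (d : α)
    {u : α} (y : α) (hu : (u ::ₘ s).sort.getD k d < u) :
    (y ::ₘ s).sort.getD k d ≤ (u ::ₘ s).sort.getD k d := by
  have hk' : k < card (u ::ₘ s) := by rw [card_cons]; omega
  have habove := lt_countP_le_sort_getD (u ::ₘ s) hk' d
  have hbelow := countP_lt_sort_getD_le (y ::ₘ s) (by rwa [card_cons] at hk' ⊢) d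
  set m := (u ::ₘ s).sort.getD k d
  set m' := (y ::ₘ s).sort.getD k d
  by_contra! hm
  have hmono : s.countP (· ≤ m) ≤ s.countP (· < m') :=
    countP_mono_left fun a _ ha => ha.trans_lt hm
  rw [countP_cons_of_neg (p := (· ≤ m)) _ hu.not_ge] at habove
  rw [countP_cons] at hbelow
  split_ifs at hbelow <;> omega

end OrderStatistic

section AbsSub

variable {R : Type*} [CommRing R] [LinearOrder R] [IsStrictOrderedRing R]

theorem abs_sub_le_abs_sub_iff_mul_nonpos (z a b : R) :
    |z - a| ≤ |z - b| ↔ (b - a) * (2 * z - (a + b)) ≤ 0 := by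
  rw [← sq_le_sq, ← sub_nonneg]
  constructor <;> intro h <;> nlinarith

theorem abs_sub_le_abs_sub_of_mul_nonneg {m z a b : R} (hm : |m - a| ≤ |m - b|)
    (hz : 0 ≤ (b - a) * (m - z)) : |z - a| ≤ |z - b| := by
  rw [abs_sub_le_abs_sub_iff_mul_nonpos] at hm ⊢
  linarith [show (b - a) * (2 * z - (a + b)) = (b - a) * (2 * m - (a + b)) - 2 * ((b - a) * (m - z))
    by ring]

end AbsSub

section Closest

variable {C : Finset ℝ}

theorem nonempty_filter_closest (hC : C.Nonempty) (p : ℝ) :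
    (C.filter fun c => ∀ c' ∈ C, |p - c| ≤ |p - c'|).Nonempty :=
  let ⟨a, ha, hmin⟩ := C.exists_min_image (fun c => |p - c|) hC
  ⟨a, mem_filter.2 ⟨ha, hmin⟩⟩

theorem tloc_eq_min' (hC : C.Nonempty) (p : ℝ) :
    tloc C p = (C.filter fun c => ∀ c' ∈ C, |p - c| ≤ |p - c'|).min'
      (nonempty_filter_closest hC p) := by
  rw [tloc, ← coe_min' (nonempty_filter_closest hC p)]
  rfl

theorem tloc_mem (hC : C.Nonempty) (p : ℝ) : tloc C p ∈ C := by
  rw [tloc_eq_min' hC]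
  exact (mem_filter.1 (min'_mem _ _)).1

theorem abs_sub_tloc_le {p c : ℝ} (hc : c ∈ C) : |p - tloc C p| ≤ |p - c| := by
  rw [tloc_eq_min' ⟨c, hc⟩]
  exact (mem_filter.1 (min'_mem _ (nonempty_filter_closest ⟨c, hc⟩ p))).2 c hc

theorem tloc_le_of_abs_sub_le {p c : ℝ} (hc : c ∈ C) (h : |p - c| ≤ |p - tloc C p|) :
    tloc C p ≤ c := by
  rw [tloc_eq_min' ⟨c, hc⟩]
  exact min'_le _ _ (mem_filter.2 ⟨hc, fun c' hc' => h.trans (abs_sub_tloc_le hc')⟩)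

theorem tloc_mono (hC : C.Nonempty) : Monotone (tloc C) := by
  intro p q hpq
  by_contra! hlt
  have hp : |p - tloc C p| < |p - tloc C q| :=
    lt_of_not_ge fun h =>
      (tloc_le_of_abs_sub_le (tloc_mem hC q) h).not_gt hlt
  have hq := abs_sub_tloc_le (p := q) (tloc_mem hC p)
  rw [← not_le, abs_sub_le_abs_sub_iff_mul_nonpos] at hp
  rw [abs_sub_le_abs_sub_iff_mul_nonpos] at hq
  nlinarith [mul_nonneg (sub_nonneg.2 hlt.le) (sub_nonneg.2 hpq)]

end Closest

theorem medOf_cons_le_medOf_cons_of_lt {s : Multiset ℝ} {u : ℝ} (y : ℝ)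
    (hu : u < medOf (u ::ₘ s)) : medOf (u ::ₘ s) ≤ medOf (y ::ₘ s) := by
  simp only [medOf, Multiset.card_cons] at hu ⊢
  exact Multiset.sort_getD_cons_le_of_lt s (by omega) 0 y hu

theorem medOf_cons_le_medOf_cons_of_gt {s : Multiset ℝ} {u : ℝ} (y : ℝ)
    (hu : medOf (u ::ₘ s) < u) : medOf (y ::ₘ s) ≤ medOf (u ::ₘ s) := by
  simp only [medOf, Multiset.card_cons] at hu ⊢
  exact Multiset.sort_getD_cons_le_of_gt s (by omega) 0 y hu

theorem median_closest_strategyproof_general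
    {ι : Type*} [Fintype ι] [DecidableEq ι]
    (C : Finset ℝ) (hC : C.Nonempty)
    (x : ι → ℝ) (i : ι) (x' : ℝ) :
    |x i - tloc C (medOf (Finset.univ.val.map x))| ≤
      |x i - tloc C (medOf (Finset.univ.val.map (Function.update x i x')))| := by
  obtain ⟨s, hx, hx'⟩ : ∃ s, univ.val.map x = x i ::ₘ s ∧
      univ.val.map (Function.update x i x') = x' ::ₘ s := by
    refine ⟨(univ.val.erase i).map x, ?_, ?_⟩ <;> rw [← Multiset.cons_erase (mem_univ i)]
    · rw [Multiset.erase_cons_head, Multiset.map_cons]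
    · rw [Multiset.erase_cons_head, Multiset.map_cons, Function.update_self]
      refine congrArg _ (Multiset.map_congr rfl fun j hj => Function.update_of_ne ?_ _ _)
      exact (univ.nodup.mem_erase_iff.1 hj).1
  rw [hx, hx']
  refine abs_sub_le_abs_sub_of_mul_nonneg (abs_sub_tloc_le (tloc_mem hC _)) ?_
  rcases lt_trichotomy (x i) (medOf (x i ::ₘ s)) with h | h | h
  · exact mul_nonneg (sub_nonneg.2 (tloc_mono hC (medOf_cons_le_medOf_cons_of_lt x' h)))
      (sub_nonneg.2 h.le)
  · rw [← h, sub_self, mul_zero]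
  · exact mul_nonneg_of_nonpos_of_nonpos
      (sub_nonpos.2 (tloc_mono hC (medOf_cons_le_medOf_cons_of_gt x' h))) (sub_nonpos.2 h.le)

/-- Placing a single facility at the candidate location closest to the median of the
reported positions is strategyproof. -/
theorem median_closest_strategyproof
    {ι : Type*} [Fintype ι] [DecidableEq ι] [Nonempty ι]
    (C : Finset ℝ) (hC : C.Nonempty)
    (x : ι → ℝ) (i : ι) (x' : ℝ) :
    |x i - tloc C (medOf (Finset.univ.val.map x))| ≤
      |x i - tloc C (medOf (Finset.univ.val.map (Function.update x i x')))| :=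
  median_closest_strategyproof_general C hC x i x'
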